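/- Let a > 1, κ > 0, μ := sqrt(aκ)/sqrt(aκ+1), and φ(θ) := θ − (1/κ + 1) μ arctan(μ tan θ) for θ ∈ (−π/2, π/2). Then φ is strictly decreasing (or strictly monotone) and the length of its range, lim_{θ→−π/2} φ(θ) − lim_{θ→π/2} φ(θ), equals π(μ(1 + 1/κ) − 1). -/

import Mathlib

/-!
Writing `D(θ) = cos² θ + μ² sin² θ`, the chain rule gives
`d/dθ arctan (μ tan θ) = μ / D(θ)`, so `θ ↦ θ - c arctan (μ tan θ)` has derivative
`1 - c μ / D(θ)`. For `μ² ≤ 1` we have `D ≤ 1`, so the derivative is negative as soon as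
`c μ > 1`; for `φ` this is `a (κ + 1) / (a κ + 1) > 1`, i.e. `a > 1`. As `θ → ±π/2`,
`μ tan θ → ±∞` for `μ > 0`, so `arctan (μ tan θ) → ±π/2` and the range of `φ` has length
`(c - 1) π`.
-/

open Real Filter Set Topology

theorem hasDerivAt_arctan_mul_tan (μ : ℝ) {θ : ℝ} (hθ : cos θ ≠ 0) :
    HasDerivAt (fun x => arctan (μ * tan x)) (μ / (cos θ ^ 2 + μ ^ 2 * sin θ ^ 2)) θ := by
  convert ((hasDerivAt_tan hθ).const_mul μ).arctan using 1
  rw [tan_eq_sin_div_cos]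
  field_simp

theorem strictAntiOn_sub_mul_arctan_mul_tan {μ c : ℝ} (hμ : μ ^ 2 ≤ 1) (hcμ : 1 < c * μ) :
    StrictAntiOn (fun θ => θ - c * arctan (μ * tan θ)) (Ioo (-(π / 2)) (π / 2)) := by
  have hderiv : ∀ θ ∈ Ioo (-(π / 2)) (π / 2), HasDerivAt (fun θ => θ - c * arctan (μ * tan θ))
      (1 - c * (μ / (cos θ ^ 2 + μ ^ 2 * sin θ ^ 2))) θ := fun θ hθ =>
    (hasDerivAt_id θ).sub ((hasDerivAt_arctan_mul_tan μ (cos_pos_of_mem_Ioo hθ).ne').const_mul c)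
  refine strictAntiOn_of_deriv_neg (convex_Ioo _ _)
    (fun θ hθ => (hderiv θ hθ).continuousAt.continuousWithinAt) fun θ hθ => ?_
  rw [interior_Ioo] at hθ
  rw [(hderiv θ hθ).deriv]
  have hD_pos : 0 < cos θ ^ 2 + μ ^ 2 * sin θ ^ 2 := by
    have := cos_pos_of_mem_Ioo hθ
    positivity
  have hD_le : cos θ ^ 2 + μ ^ 2 * sin θ ^ 2 ≤ 1 := by
    nlinarith [sin_sq_add_cos_sq θ, sq_nonneg (sin θ)]
  rw [mul_div_assoc', sub_neg, one_lt_div hD_pos]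
  linarith

theorem tendsto_sub_mul_arctan_mul_tan_nhdsGT_neg_pi_div_two {μ : ℝ} (hμ : 0 < μ) (c : ℝ) :
    Tendsto (fun θ => θ - c * arctan (μ * tan θ)) (𝓝[>] (-(π / 2)))
      (𝓝 (-(π / 2) - c * -(π / 2))) := by
  have harctan : Tendsto (fun θ => arctan (μ * tan θ)) (𝓝[>] (-(π / 2))) (𝓝 (-(π / 2))) :=
    tendsto_nhds_of_tendsto_nhdsWithin
      (tendsto_arctan_atBot.comp (tendsto_tan_neg_pi_div_two.const_mul_atBot hμ))
  exact (tendsto_nhdsWithin_of_tendsto_nhds tendsto_id).sub (harctan.const_mul c)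

theorem tendsto_sub_mul_arctan_mul_tan_nhdsLT_pi_div_two {μ : ℝ} (hμ : 0 < μ) (c : ℝ) :
    Tendsto (fun θ => θ - c * arctan (μ * tan θ)) (𝓝[<] (π / 2)) (𝓝 (π / 2 - c * (π / 2))) := by
  have harctan : Tendsto (fun θ => arctan (μ * tan θ)) (𝓝[<] (π / 2)) (𝓝 (π / 2)) :=
    tendsto_nhds_of_tendsto_nhdsWithin
      (tendsto_arctan_atTop.comp (tendsto_tan_pi_div_two.const_mul_atTop hμ))
  exact (tendsto_nhdsWithin_of_tendsto_nhds tendsto_id).sub (harctan.const_mul c)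

theorem sq_sqrt_div_sqrt_add_one {x : ℝ} (hx : 0 ≤ x) :
    (√x / √(x + 1)) ^ 2 = x / (x + 1) := by
  rw [div_pow, sq_sqrt hx, sq_sqrt (by linarith)]

theorem aronsson_phi_monotone_and_range (a κ : ℝ) (ha : 1 < a) (hκ : 0 < κ)
    (μ : ℝ) (hμ : μ = Real.sqrt (a*κ) / Real.sqrt (a*κ + 1))
    (φ : ℝ → ℝ)
    (hφ : ∀ θ, φ θ = θ - (1/κ + 1) * μ * Real.arctan (μ * Real.tan θ)) :
    StrictAntiOn φ (Set.Ioo (-(Real.pi/2)) (Real.pi/2)) ∧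
    ∃ A B : ℝ,
      Filter.Tendsto φ (nhdsWithin (-(Real.pi/2)) (Set.Ioi (-(Real.pi/2)))) (nhds A) ∧
      Filter.Tendsto φ (nhdsWithin (Real.pi/2) (Set.Iio (Real.pi/2))) (nhds B) ∧
      A - B = Real.pi * (μ * (1 + 1/κ) - 1) := by
  have haκ : 0 < a * κ := mul_pos (by linarith) hκ
  have hμ_sq : μ ^ 2 = a * κ / (a * κ + 1) := hμ ▸ sq_sqrt_div_sqrt_add_one haκ.le
  have hμ_pos : 0 < μ := hμ ▸ div_pos (sqrt_pos.2 haκ) (sqrt_pos.2 (by linarith))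
  have hμ_le : μ ^ 2 ≤ 1 := by
    rw [hμ_sq, div_le_one (by linarith)]
    linarith
  have hcμ : 1 < (1 / κ + 1) * μ * μ := by
    have hcμ_eq : (1 / κ + 1) * μ * μ = a * (κ + 1) / (a * κ + 1) := by
      rw [mul_assoc, ← sq, hμ_sq]
      field_simp
      ring
    rw [hcμ_eq, one_lt_div (by positivity)]
    linarith
  obtain rfl : φ = fun θ => θ - (1 / κ + 1) * μ * arctan (μ * tan θ) := funext hφ
  refine ⟨strictAntiOn_sub_mul_arctan_mul_tan hμ_le hcμ, _, _,
    tendsto_sub_mul_arctan_mul_tan_nhdsGT_neg_pi_div_two hμ_pos _,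
    tendsto_sub_mul_arctan_mul_tan_nhdsLT_pi_div_two hμ_pos _, by ring⟩
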